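/- arXiv:1504.04171 — 4 statements merged into one kernel-verified Lean document; each statement's English description precedes it below -/
import Mathlib

section
/- Let q be a prime power and α ∈ 𝔽_{q^3}^*. Then the equation β^q/α + β^{q^2}/α^q + β/α^{q^2} = 1 has exactly q^2 distinct solutions β in 𝔽_{q^3}, and all of these solutions are nonzero. -/
/-!
With `q = p ^ n` and `#F = q ^ 3`, the left-hand side is `T (β / α ^ q ^ 2)`, where
`T x = x + x ^ q + x ^ q ^ 2` is the trace of `F` over its subfield of order `q`, and
`β ↦ β / α ^ q ^ 2` is a bijection since `α ≠ 0`. The additive map `T` takes values in the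
roots of `X ^ q - X`, so its range has at most `q` elements, and its kernel consists of roots of
`X ^ q ^ 2 + X ^ q + X`, so it has at most `q ^ 2` elements. As `#ker * #range = q ^ 3`, both bounds
are attained: `T` maps onto the roots of `X ^ q - X`, which contain `1`, and the fibre `T⁻¹ {1}`
is a coset of the kernel, of size `q ^ 2`. Finally `β = 0` gives `0 = 1`.
-/

open Polynomial

namespace AddMonoidHom

variable {G H : Type*} [AddGroup G] [AddGroup H]

theorem card_ker_mul_card_range (f : G →+ H) :
    Nat.card f.ker * Nat.card f.range = Nat.card G := by
  rw [← AddSubgroup.index_ker, AddSubgroup.card_mul_index]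

theorem card_ker_eq_and_card_range_eq_of_le [Finite G] {f : G →+ H} {a b : ℕ}
    (hker : Nat.card f.ker ≤ a) (hrange : Nat.card f.range ≤ b) (hG : Nat.card G = a * b) :
    Nat.card f.ker = a ∧ Nat.card f.range = b := by
  have hprod := f.card_ker_mul_card_range
  have hpos : 0 < Nat.card f.ker * Nat.card f.range := hprod ▸ Nat.card_pos
  have hk := Nat.pos_of_mul_pos_right hpos
  have hr := Nat.pos_of_mul_pos_left hpos
  constructor <;> nlinarith [Nat.mul_le_mul hker hrange]

theorem ncard_setOf_eq_of_mem_range (f : G →+ H) {y : H} (hy : y ∈ f.range) :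
    {x | f x = y}.ncard = Nat.card f.ker := by
  obtain ⟨x₀, rfl⟩ := hy
  have : {x | f x = f x₀} = (x₀ + ·) '' f.ker := by
    ext x
    refine ⟨fun hx => ⟨-x₀ + x, ?_, by simp⟩, ?_⟩
    · simp [mem_ker, map_add, hx.symm]
    · rintro ⟨k, hk, rfl⟩
      simp [(mem_ker).1 hk]
  rw [this, Set.ncard_image_of_injective _ (add_right_injective x₀), ← Nat.card_coe_set_eq]
  rfl

end AddMonoidHom

theorem Polynomial.ncard_le_natDegree_of_forall_isRoot {F : Type*} [Field F] {P : F[X]}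
    (hP : P ≠ 0) {s : Set F} (hs : ∀ x ∈ s, P.IsRoot x) : s.ncard ≤ P.natDegree :=
  calc s.ncard ≤ (P.rootSet F).ncard :=
        Set.ncard_le_ncard (fun x hx => (mem_rootSet_of_ne hP).2 (by simpa using hs x hx))
          (P.rootSet_finite F)
    _ ≤ P.natDegree := P.ncard_rootSet_le F

theorem ncard_setOf_pow_eq_self_le {F : Type*} [Field F] {q : ℕ} (hq : 1 < q) :
    {x : F | x ^ q = x}.ncard ≤ q := by
  refine (ncard_le_natDegree_of_forall_isRoot (FiniteField.X_pow_card_sub_X_ne_zero F hq)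
    ?_).trans_eq (FiniteField.X_pow_card_sub_X_natDegree_eq F hq)
  simp [sub_eq_zero]

theorem natDegree_X_pow_sq_add_X_pow_add_X {F : Type*} [Field F] {q : ℕ} (hq : 1 < q) :
    (X ^ q ^ 2 + X ^ q + X : F[X]).natDegree = q ^ 2 := by
  have hq2 : q < q ^ 2 := by nlinarith
  rw [natDegree_add_eq_left_of_natDegree_lt] <;> rw [natDegree_add_eq_left_of_natDegree_lt] <;>
    simp only [natDegree_X_pow, natDegree_X] <;> omega

theorem FiniteField.pow_eq_self_of_card_eq {F : Type*} [Field F] [Fintype F] {q : ℕ}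
    (hF : Fintype.card F = q) (x : F) : x ^ q = x :=
  hF ▸ FiniteField.pow_card x

section FrobeniusTrace

variable {F : Type*} [Field F] (p n : ℕ) [ExpChar F p]

noncomputable def frobeniusTrace : F →+ F :=
  let φ := (iterateFrobenius F p n).toAddMonoidHom
  AddMonoidHom.id F + φ + φ.comp φ

theorem frobeniusTrace_apply (x : F) :
    frobeniusTrace p n x = x + x ^ p ^ n + x ^ (p ^ n) ^ 2 := by
  simp [frobeniusTrace, iterateFrobenius_def, ← pow_mul, sq]

variable {p n}

theorem card_ker_frobeniusTrace_le (hq : 1 < p ^ n) :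
    Nat.card (frobeniusTrace p n : F →+ F).ker ≤ (p ^ n) ^ 2 := by
  have hdeg := natDegree_X_pow_sq_add_X_pow_add_X (F := F) hq
  rw [← SetLike.coe_sort_coe, Nat.card_coe_set_eq, ← hdeg]
  refine ncard_le_natDegree_of_forall_isRoot (ne_zero_of_natDegree_gt (n := 0) ?_) fun x hx => ?_
  · rw [hdeg]; positivity
  · have : frobeniusTrace p n x = 0 := hx
    simp only [IsRoot, eval_add, eval_pow, eval_X, ← this, frobeniusTrace_apply]
    ring

variable [Fintype F]

theorem frobeniusTrace_pow_eq_self (hF : Fintype.card F = (p ^ n) ^ 3) (x : F) :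
    frobeniusTrace p n x ^ p ^ n = frobeniusTrace p n x := by
  rw [frobeniusTrace_apply, add_pow_expChar_pow, add_pow_expChar_pow, ← pow_mul, ← pow_mul,
    ← pow_two, ← pow_succ, FiniteField.pow_eq_self_of_card_eq hF]
  ring

theorem frobeniusTrace_div_pow (hF : Fintype.card F = (p ^ n) ^ 3) (α β : F) :
    frobeniusTrace p n (β / α ^ (p ^ n) ^ 2) =
      β ^ p ^ n / α + β ^ (p ^ n) ^ 2 / α ^ p ^ n + β / α ^ (p ^ n) ^ 2 := by
  have hcube : (α ^ (p ^ n) ^ 2) ^ p ^ n = α := by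
    rw [← pow_mul, ← pow_succ, FiniteField.pow_eq_self_of_card_eq hF]
  have hfourth : (α ^ (p ^ n) ^ 2) ^ (p ^ n) ^ 2 = α ^ p ^ n :=
    calc (α ^ (p ^ n) ^ 2) ^ (p ^ n) ^ 2 = ((α ^ (p ^ n) ^ 2) ^ p ^ n) ^ p ^ n := by
          ring
      _ = α ^ p ^ n := by rw [hcube]
  rw [frobeniusTrace_apply, div_pow, div_pow, hcube, hfourth]
  ring

theorem card_ker_frobeniusTrace_and_card_range (hF : Fintype.card F = (p ^ n) ^ 3)
    (hq : 1 < p ^ n) :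
    Nat.card (frobeniusTrace p n : F →+ F).ker = (p ^ n) ^ 2 ∧
      Nat.card (frobeniusTrace p n : F →+ F).range = p ^ n := by
  refine AddMonoidHom.card_ker_eq_and_card_range_eq_of_le (card_ker_frobeniusTrace_le hq) ?_
    (by rw [Nat.card_eq_fintype_card, hF]; ring)
  rw [← SetLike.coe_sort_coe, Nat.card_coe_set_eq]
  refine (Set.ncard_le_ncard ?_ (Set.toFinite _)).trans (ncard_setOf_pow_eq_self_le hq)
  rintro _ ⟨x, rfl⟩
  exact frobeniusTrace_pow_eq_self hF x

theorem coe_range_frobeniusTrace (hF : Fintype.card F = (p ^ n) ^ 3) (hq : 1 < p ^ n) :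
    ((frobeniusTrace p n : F →+ F).range : Set F) = {x | x ^ p ^ n = x} := by
  refine Set.eq_of_subset_of_ncard_le ?_ ?_ (Set.toFinite _)
  · rintro _ ⟨x, rfl⟩
    exact frobeniusTrace_pow_eq_self hF x
  · have hrange : ((frobeniusTrace p n : F →+ F).range : Set F).ncard = p ^ n := by
      rw [← Nat.card_coe_set_eq, SetLike.coe_sort_coe,
        (card_ker_frobeniusTrace_and_card_range hF hq).2]
    exact (ncard_setOf_pow_eq_self_le hq).trans_eq hrange.symm

theorem ncard_setOf_frobeniusTrace_eq_one (hF : Fintype.card F = (p ^ n) ^ 3) (hq : 1 < p ^ n) :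
    {x : F | frobeniusTrace p n x = 1}.ncard = (p ^ n) ^ 2 := by
  have hone : (1 : F) ∈ (frobeniusTrace p n : F →+ F).range := by
    rw [← SetLike.mem_coe, coe_range_frobeniusTrace hF hq]
    exact one_pow _
  rw [AddMonoidHom.ncard_setOf_eq_of_mem_range _ hone,
    (card_ker_frobeniusTrace_and_card_range hF hq).1]

end FrobeniusTrace

theorem stmt_2 (p n q : ℕ) (hp : p.Prime) (hn : n ≠ 0) (hq : q = p ^ n)
    (F : Type*) [Field F] [Fintype F] (hF : Fintype.card F = q ^ 3)
    (α : F) (hα : α ≠ 0) :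
    {β : F | β ^ q / α + β ^ (q ^ 2) / α ^ q + β / α ^ (q ^ 2) = 1}.ncard = q ^ 2 ∧
    (∀ β : F, β ^ q / α + β ^ (q ^ 2) / α ^ q + β / α ^ (q ^ 2) = 1 → β ≠ 0) := by
  subst hq
  have : Fact p.Prime := ⟨hp⟩
  have : CharP F p := charP_of_card_eq_prime_pow (f := n * 3) (by rw [hF, pow_mul])
  have hq : 1 < p ^ n := Nat.one_lt_pow hn hp.one_lt
  set e := Equiv.divRight₀ (α ^ (p ^ n) ^ 2) (pow_ne_zero _ hα)
  have hsol :
      {β : F | β ^ p ^ n / α + β ^ (p ^ n) ^ 2 / α ^ p ^ n + β / α ^ (p ^ n) ^ 2 = 1} =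
        e ⁻¹' {x | frobeniusTrace p n x = 1} := by
    ext β
    simp [e, frobeniusTrace_div_pow hF]
  refine ⟨?_, ?_⟩
  · rw [hsol, Set.ncard_preimage_of_injective_subset_range e.injective
      (e.surjective.range_eq ▸ Set.subset_univ _), ncard_setOf_frobeniusTrace_eq_one hF hq]
  · rintro β hβ rfl
    simp [hp.ne_zero] at hβ
end

section
/- Let q ≥ 2 be an integer and let r ≥ q³ − 1 be an integer. Define N(r) to be the number of lattice points (i,j) ∈ ℤ² with 0 ≤ (q+1)i − qj < q³ + q² + q, 0 ≤ i + q²j, and qi + j ≤ r. Then N(r+1) = N(r) + q. -/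
/-!
With `D = q² + q + 1`, the first two conditions say that `D i - q (q i + j)` lies in
`[0, q D)`. On the line `q i + j = s` this pins `D i` to a half-open interval of length `q D`,
which contains exactly `q` integers `i`; and once `s ≥ q³ - 1` the third condition
`0 ≤ q² s - (q³ - 1) i` is implied by the second. Hence each new level line contributes
exactly `q` points.
-/

def InStrip (q : ℤ) (x : ℤ × ℤ) : Prop :=
  0 ≤ (q + 1) * x.1 - q * x.2 ∧ (q + 1) * x.1 - q * x.2 < q ^ 3 + q ^ 2 + q ∧
    0 ≤ x.1 + q ^ 2 * x.2

theorem Set.ncard_setOf_le_add_one {α : Type*} (P : α → Prop) (f : α → ℤ) (r : ℤ)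
    (hfin : {x | P x ∧ f x ≤ r + 1}.Finite) :
    {x | P x ∧ f x ≤ r + 1}.ncard = {x | P x ∧ f x ≤ r}.ncard + {x | P x ∧ f x = r + 1}.ncard := by
  have hsplit : {x | P x ∧ f x ≤ r + 1} = {x | P x ∧ f x ≤ r} ∪ {x | P x ∧ f x = r + 1} := by
    ext x
    simp only [Set.mem_ofPred_eq, Set.mem_union, Int.le_add_one_iff, and_or_left]
  have hdisj : Disjoint {x | P x ∧ f x ≤ r} {x | P x ∧ f x = r + 1} :=
    Set.disjoint_left.2 fun x hle heq => by simp only [Set.mem_ofPred_eq] at hle heq; omega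
  rw [hsplit] at hfin ⊢
  exact Set.ncard_union_eq hdisj (hfin.subset Set.subset_union_left)
    (hfin.subset Set.subset_union_right)

theorem Int.ncard_setOf_mul_mem_Ico {D : ℤ} (hD : 0 < D) (c n : ℤ) :
    {i : ℤ | c ≤ D * i ∧ D * i < c + n * D}.ncard = n.toNat := by
  obtain ⟨i₀, hlo, hhi⟩ : ∃ i₀ : ℤ, c ≤ D * i₀ ∧ D * i₀ < c + D :=
    ⟨-(-c / D), by linarith [Int.ediv_mul_le (-c) hD.ne'],
      by linarith [Int.lt_ediv_add_one_mul_self (-c) hD]⟩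
  have hIco : {i : ℤ | c ≤ D * i ∧ D * i < c + n * D} = Set.Ico i₀ (i₀ + n) := by
    ext i
    simp only [Set.mem_ofPred_eq, Set.mem_Ico]
    constructor
    · rintro ⟨hci, hin⟩
      have h₁ : D * (i₀ - 1) < D * i := by linarith
      have h₂ : D * i < D * (i₀ + n) := by linarith
      exact ⟨by linarith [lt_of_mul_lt_mul_left h₁ hD.le],
        lt_of_mul_lt_mul_left h₂ hD.le⟩
    · rintro ⟨hi₀i, hin⟩
      have h₁ : D * i₀ ≤ D * i := mul_le_mul_of_nonneg_left hi₀i hD.le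
      have h₂ : D * i ≤ D * (i₀ + n - 1) := mul_le_mul_of_nonneg_left (by omega) hD.le
      constructor <;> nlinarith
  rw [hIco, ← Finset.coe_Ico, Set.ncard_coe_finset, Int.card_Ico, add_sub_cancel_left]

namespace InStrip

variable {q : ℤ}

theorem nonneg (hq : 0 < q) {x : ℤ × ℤ} (hx : InStrip q x) : 0 ≤ x.1 ∧ 0 ≤ x.2 := by
  obtain ⟨ha, ha', hb⟩ := hx
  have hD : 0 < q ^ 2 + q + 1 := by positivity
  constructor
  · have key : q * (q ^ 2 + q + 1) * x.1
        = q ^ 2 * ((q + 1) * x.1 - q * x.2) + q * (x.1 + q ^ 2 * x.2) := by ring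
    have : 0 ≤ q * (q ^ 2 + q + 1) * x.1 := by rw [key]; positivity
    exact nonneg_of_mul_nonneg_right this (by positivity)
  · have key : q * (q ^ 2 + q + 1) * (x.2 + 1)
        = (q + 1) * (x.1 + q ^ 2 * x.2) + (q ^ 3 + q ^ 2 + q - ((q + 1) * x.1 - q * x.2)) := by
      ring
    have : 0 < q * (q ^ 2 + q + 1) * (x.2 + 1) := by rw [key]; nlinarith
    have := pos_of_mul_pos_right this (by positivity)
    omega

theorem finite_setOf_le (hq : 0 < q) (t : ℤ) : {x | InStrip q x ∧ q * x.1 + x.2 ≤ t}.Finite := by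
  refine (Set.finite_Icc ((0, 0) : ℤ × ℤ) (t, t)).subset ?_
  rintro ⟨i, j⟩ ⟨hx, hxt⟩
  obtain ⟨hi, hj⟩ := hx.nonneg hq
  simp only [Set.mem_Icc, Prod.mk_le_mk] at hxt ⊢
  refine ⟨⟨hi, hj⟩, ?_, ?_⟩ <;> nlinarith

theorem ncard_setOf_eq (hq : 0 < q) {s : ℤ} (hs : q ^ 3 - 1 ≤ s) :
    {x | InStrip q x ∧ q * x.1 + x.2 = s}.ncard = q.toNat := by
  set D := q ^ 2 + q + 1
  have hline : {x | InStrip q x ∧ q * x.1 + x.2 = s}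
      = (fun i : ℤ => (i, s - q * i)) '' {i | q * s ≤ D * i ∧ D * i < q * s + q * D} := by
    ext ⟨i, j⟩
    simp only [InStrip, Set.mem_ofPred_eq, Set.mem_image, Prod.mk.injEq]
    constructor
    · rintro ⟨⟨ha, ha', -⟩, rfl⟩
      exact ⟨i, ⟨by linarith, by linarith⟩, rfl, by ring⟩
    · rintro ⟨i, ⟨hlo, hhi⟩, rfl, rfl⟩
      -- the third strip condition is `(q - 1) (D i) ≤ q² s`, which follows from `D i < q s + q D`
      have hthird : (q - 1) * (D * i) ≤ (q - 1) * (q * s + q * D) :=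
        mul_le_mul_of_nonneg_left hhi.le (by linarith)
      exact ⟨⟨by linarith, by linarith, by nlinarith⟩, by ring⟩
  rw [hline, Set.ncard_image_of_injective _ fun a b h => congrArg Prod.fst h,
    Int.ncard_setOf_mul_mem_Ico (by positivity)]

end InStrip

theorem stmt_7 (q r : ℤ) (hq : 2 ≤ q) (hr : q ^ 3 - 1 ≤ r) :
    ({ij : ℤ × ℤ | 0 ≤ (q + 1) * ij.1 - q * ij.2 ∧
        (q + 1) * ij.1 - q * ij.2 < q ^ 3 + q ^ 2 + q ∧
        0 ≤ ij.1 + q ^ 2 * ij.2 ∧ q * ij.1 + ij.2 ≤ r + 1}.ncard : ℤ)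
      = ({ij : ℤ × ℤ | 0 ≤ (q + 1) * ij.1 - q * ij.2 ∧
        (q + 1) * ij.1 - q * ij.2 < q ^ 3 + q ^ 2 + q ∧
        0 ≤ ij.1 + q ^ 2 * ij.2 ∧ q * ij.1 + ij.2 ≤ r}.ncard : ℤ) + q := by
  have hq0 : 0 < q := by linarith
  have hregion : ∀ t : ℤ, {ij : ℤ × ℤ | 0 ≤ (q + 1) * ij.1 - q * ij.2 ∧
      (q + 1) * ij.1 - q * ij.2 < q ^ 3 + q ^ 2 + q ∧
      0 ≤ ij.1 + q ^ 2 * ij.2 ∧ q * ij.1 + ij.2 ≤ t}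
      = {x | InStrip q x ∧ q * x.1 + x.2 ≤ t} := fun t => by
    ext
    simp only [InStrip, Set.mem_ofPred_eq, and_assoc]
  rw [hregion, hregion, Set.ncard_setOf_le_add_one _ _ _ (InStrip.finite_setOf_le hq0 _),
    InStrip.ncard_setOf_eq hq0 (by linarith), Nat.cast_add, Int.toNat_of_nonneg hq0.le]
end

section
/- Let q ≥ 2 be an integer and r ≥ 0 an integer. The number of lattice points (i,j) ∈ ℤ² satisfying 0 ≤ (q+1)i − qj < q³ + q² + q, 0 ≤ i + q²j, and qi + j ≤ r equals the number of lattice points (i,j) ∈ ℤ² satisfying 0 ≤ (q+1)i − qj, qi + j ≤ r, and 0 ≤ j ≤ q² − 1. -/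
/-!
Write `v = q * i + j`, so that `(q + 1) * i - q * j = (q ^ 2 + q + 1) * i - q * v`. Moving along
`(1, -q)` keeps `v` fixed, and on the line of level `v` (parametrised by `i`) the condition
`0 ≤ (q + 1) * i - q * j` reads `a ≤ i` with `a = ⌈q v / (q ^ 2 + q + 1)⌉`, while `0 ≤ j` reads
`i ≤ b` with `b = ⌊v / q⌋`. The first set meets the line in the window `[a, a + q)` cut at `b`
(its condition `0 ≤ i + q ^ 2 * j` is equivalent to `0 ≤ j` there), the second in the window
`(b - q, b]` cut at `a`. Translating by `max 0 (b - q + 1 - a)` maps the first onto the second.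
-/

open Set

theorem mem_Ico_inter_Iic_iff_add_max_mem (a b n i : ℤ) :
    i ∈ Ico a (a + n) ∩ Iic b ↔ i + max 0 (b - n + 1 - a) ∈ Ici a ∩ Ioc (b - n) b := by
  simp only [mem_inter_iff, mem_Ico, mem_Iic, mem_Ici, mem_Ioc]
  omega

def shiftAlongLevel (q : ℤ) (m : ℤ → ℤ) : ℤ × ℤ ≃ ℤ × ℤ where
  toFun p := (p.1 + m (q * p.1 + p.2), p.2 - q * m (q * p.1 + p.2))
  invFun p := (p.1 - m (q * p.1 + p.2), p.2 + q * m (q * p.1 + p.2))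
  left_inv p := by
    have : q * (p.1 + m (q * p.1 + p.2)) + (p.2 - q * m (q * p.1 + p.2)) = q * p.1 + p.2 := by ring
    ext <;> simp only [this] <;> ring
  right_inv p := by
    have : q * (p.1 - m (q * p.1 + p.2)) + (p.2 + q * m (q * p.1 + p.2)) = q * p.1 + p.2 := by ring
    ext <;> simp only [this] <;> ring

lemma sq_add_add_one_pos (q : ℤ) : 0 < q ^ 2 + q + 1 := by nlinarith [sq_nonneg (q + 1)]

def lowerEnd (q v : ℤ) : ℤ := ⌈(q * v : ℚ) / (q ^ 2 + q + 1)⌉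

section

variable {q i j v : ℤ}

theorem lowerEnd_le_iff (hv : q * i + j = v) :
    lowerEnd q v ≤ i ↔ 0 ≤ (q + 1) * i - q * j := by
  have hM : (0 : ℚ) < q ^ 2 + q + 1 := by exact_mod_cast sq_add_add_one_pos q
  rw [lowerEnd, Int.ceil_le, div_le_iff₀ hM, ← hv]
  norm_cast
  constructor <;> intro h <;> linarith

theorem lt_lowerEnd_add_iff (hv : q * i + j = v) :
    i < lowerEnd q v + q ↔ (q + 1) * i - q * j < q ^ 3 + q ^ 2 + q := by
  have hM : (0 : ℚ) < q ^ 2 + q + 1 := by exact_mod_cast sq_add_add_one_pos q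
  rw [← sub_lt_iff_lt_add, lowerEnd, Int.lt_ceil, lt_div_iff₀ hM, ← hv]
  norm_cast
  constructor <;> intro h <;> linarith

theorem le_level_ediv_iff (hq : 0 < q) (hv : q * i + j = v) : i ≤ v / q ↔ 0 ≤ j := by
  rw [Int.le_ediv_iff_mul_le hq, ← hv]
  constructor <;> intro h <;> linarith

theorem level_ediv_sub_lt_iff (hq : 0 < q) (hv : q * i + j = v) :
    v / q - q < i ↔ j ≤ q ^ 2 - 1 := by
  rw [sub_lt_iff_lt_add, Int.ediv_lt_iff_lt_mul hq, ← hv]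
  constructor <;> intro h <;> nlinarith

theorem add_sq_mul_nonneg_iff (hq : 0 < q) (h₀ : 0 ≤ (q + 1) * i - q * j)
    (h₁ : (q + 1) * i - q * j < q ^ 3 + q ^ 2 + q) : 0 ≤ i + q ^ 2 * j ↔ 0 ≤ j := by
  have key : (q + 1) * (i + q ^ 2 * j) = ((q + 1) * i - q * j) + q * (q ^ 2 + q + 1) * j := by ring
  constructor <;> intro h
  · by_contra! hj
    nlinarith
  · nlinarith

end

def windowShift (q : ℤ) : ℤ × ℤ ≃ ℤ × ℤ :=
  shiftAlongLevel q fun v ↦ max 0 (v / q - q + 1 - lowerEnd q v)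

theorem windowShift_mem_iff {q : ℤ} (hq : 0 < q) (r i j : ℤ) :
    (0 ≤ (q + 1) * i - q * j ∧ (q + 1) * i - q * j < q ^ 3 + q ^ 2 + q ∧
        0 ≤ j ∧ q * i + j ≤ r) ↔
      (0 ≤ (q + 1) * (windowShift q (i, j)).1 - q * (windowShift q (i, j)).2 ∧
        q * (windowShift q (i, j)).1 + (windowShift q (i, j)).2 ≤ r ∧
        0 ≤ (windowShift q (i, j)).2 ∧ (windowShift q (i, j)).2 ≤ q ^ 2 - 1) := by
  set v := q * i + j with hv
  set m := max 0 (v / q - q + 1 - lowerEnd q v)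
  have hshift : windowShift q (i, j) = (i + m, j - q * m) := rfl
  have hv' : q * (i + m) + (j - q * m) = v := by rw [hv]; ring
  have hwindow := mem_Ico_inter_Iic_iff_add_max_mem (lowerEnd q v) (v / q) q i
  simp only [mem_inter_iff, mem_Ico, mem_Iic, mem_Ici, mem_Ioc] at hwindow
  rw [hshift, hv', ← lowerEnd_le_iff hv.symm, ← lt_lowerEnd_add_iff hv.symm,
    ← le_level_ediv_iff hq hv.symm, ← lowerEnd_le_iff hv', ← le_level_ediv_iff hq hv',
    ← level_ediv_sub_lt_iff hq hv']
  tauto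

theorem stmt_8_general (q r : ℤ) (hq : 2 ≤ q) :
    {ij : ℤ × ℤ | 0 ≤ (q + 1) * ij.1 - q * ij.2 ∧
        (q + 1) * ij.1 - q * ij.2 < q ^ 3 + q ^ 2 + q ∧
        0 ≤ ij.1 + q ^ 2 * ij.2 ∧ q * ij.1 + ij.2 ≤ r}.ncard
      = {ij : ℤ × ℤ | 0 ≤ (q + 1) * ij.1 - q * ij.2 ∧ q * ij.1 + ij.2 ≤ r ∧
        0 ≤ ij.2 ∧ ij.2 ≤ q ^ 2 - 1}.ncard := by
  have hq₀ : 0 < q := by omega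
  refine .trans ?_ (ncard_preimage_of_injective_subset_range (windowShift q).injective (by simp))
  congr 1
  ext ⟨i, j⟩
  rw [mem_preimage, mem_ofPred_eq, mem_ofPred_eq, ← windowShift_mem_iff hq₀]
  constructor
  · rintro ⟨h₀, h₁, h₂, h₃⟩
    exact ⟨h₀, h₁, (add_sq_mul_nonneg_iff hq₀ h₀ h₁).mp h₂, h₃⟩
  · rintro ⟨h₀, h₁, h₂, h₃⟩
    exact ⟨h₀, h₁, (add_sq_mul_nonneg_iff hq₀ h₀ h₁).mpr h₂, h₃⟩

theorem stmt_8 (q r : ℤ) (hq : 2 ≤ q) (hr : 0 ≤ r) :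
    {ij : ℤ × ℤ | 0 ≤ (q + 1) * ij.1 - q * ij.2 ∧
        (q + 1) * ij.1 - q * ij.2 < q ^ 3 + q ^ 2 + q ∧
        0 ≤ ij.1 + q ^ 2 * ij.2 ∧ q * ij.1 + ij.2 ≤ r}.ncard
      = {ij : ℤ × ℤ | 0 ≤ (q + 1) * ij.1 - q * ij.2 ∧ q * ij.1 + ij.2 ≤ r ∧
        0 ≤ ij.2 ∧ ij.2 ≤ q ^ 2 - 1}.ncard :=
  stmt_8_general q r hq
end

section
/- Let q ≥ 2 be an integer and set r₀ = q³ − 1. For every integer r with 0 ≤ r ≤ r₀, let N(r) denote the number of lattice points (i,j) ∈ ℤ² satisfying 0 ≤ (q+1)i − qj < q³ + q² + q, 0 ≤ i + q²j, and qi + j ≤ r. Then the sequence N(0) ≤ N(1) ≤ ⋯ ≤ N(r₀) is nondecreasing, with N(r₀) = q⁴/2 + q/2 and N(0) = 1. -/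
namespace Stmt19
variable (q : ℤ)

noncomputable def R1 : Finset (ℤ×ℤ) := Finset.Icc 0 (q^2-q) ×ˢ Finset.Icc 0 (q^2-1)
noncomputable def R2 : Finset (ℤ×ℤ) := Finset.Icc (q^2-q+1) (q^2-1) ×ˢ Finset.Icc 0 (q^2-1)
noncomputable def F1 : Finset (ℤ×ℤ) := (R1 q).filter (fun p => q * p.2 ≤ (q+1) * p.1)
noncomputable def F2 : Finset (ℤ×ℤ) := (R2 q).filter (fun p => q * p.1 + p.2 ≤ q^3 - 1)

lemma mem_F1 (p : ℤ×ℤ) : p ∈ F1 q ↔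
    (0 ≤ p.1 ∧ p.1 ≤ q^2-q) ∧ (0 ≤ p.2 ∧ p.2 ≤ q^2-1) ∧ q * p.2 ≤ (q+1) * p.1 := by
  simp [F1, R1, Finset.mem_filter, Finset.mem_product, Finset.mem_Icc, and_assoc]

lemma mem_F2 (p : ℤ×ℤ) : p ∈ F2 q ↔
    (q^2-q+1 ≤ p.1 ∧ p.1 ≤ q^2-1) ∧ (0 ≤ p.2 ∧ p.2 ≤ q^2-1) ∧ q * p.1 + p.2 ≤ q^3-1 := by
  simp [F2, R2, Finset.mem_filter, Finset.mem_product, Finset.mem_Icc, and_assoc]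

end Stmt19

namespace Stmt19

lemma setEq (q : ℤ) (hq : 2 ≤ q) :
    {ij : ℤ × ℤ | 0 ≤ (q + 1) * ij.1 - q * ij.2 ∧
        (q + 1) * ij.1 - q * ij.2 < q ^ 3 + q ^ 2 + q ∧
        0 ≤ ij.1 + q ^ 2 * ij.2 ∧ q * ij.1 + ij.2 ≤ q^3 - 1} = ↑(F1 q ∪ F2 q) := by
  have hq0 : (0:ℤ) < q := by linarith
  ext ⟨i, j⟩
  simp only [Set.mem_setOf_eq, Finset.coe_union, Set.mem_union, Finset.mem_coe,
    mem_F1, mem_F2]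
  constructor
  · rintro ⟨h1, h2, h3, h4⟩
    have hi0 : 0 ≤ i := by nlinarith
    have hi1 : i ≤ q^2 - 1 := by nlinarith
    have hj0 : 0 ≤ j := by nlinarith
    by_cases hc : i ≤ q^2 - q
    · left
      refine ⟨⟨hi0, hc⟩, ⟨hj0, ?_⟩, by linarith⟩
      nlinarith
    · right
      refine ⟨⟨by linarith, hi1⟩, ⟨hj0, ?_⟩, h4⟩
      nlinarith
  · rintro (⟨⟨hi0, hi1⟩, ⟨hj0, hj1⟩, h⟩ | ⟨⟨hi0, hi1⟩, ⟨hj0, hj1⟩, h⟩)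
    · refine ⟨by linarith, by nlinarith, by nlinarith, by nlinarith⟩
    · refine ⟨by nlinarith, by nlinarith, by nlinarith, h⟩

end Stmt19

namespace Stmt19

lemma card_R1 (q : ℤ) (hq : 2 ≤ q) : ((R1 q).card : ℤ) = (q^2-q+1) * q^2 := by
  rw [R1, Finset.card_product, Int.card_Icc, Int.card_Icc]
  push_cast
  rw [Int.toNat_of_nonneg (by nlinarith), Int.toNat_of_nonneg (by nlinarith)]
  ring

lemma card_R2 (q : ℤ) (hq : 2 ≤ q) : ((R2 q).card : ℤ) = (q-1) * q^2 := by
  rw [R2, Finset.card_product, Int.card_Icc, Int.card_Icc]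
  push_cast
  rw [Int.toNat_of_nonneg (by nlinarith), Int.toNat_of_nonneg (by nlinarith)]
  ring

end Stmt19

namespace Stmt19

lemma two_F2 (q : ℤ) (hq : 2 ≤ q) : 2 * ((F2 q).card : ℤ) = (q-1) * q^2 := by
  have hq0 : (0:ℤ) < q := by linarith
  set σ : ℤ×ℤ → ℤ×ℤ := fun p => (2*q^2-q-p.1, q^2-1-p.2) with hσ
  have hinj : Function.Injective σ := by
    intro a b h
    simp only [hσ, Prod.ext_iff] at h ⊢
    omega
  have himg : (F2 q).image σ = (R2 q).filter (fun p => ¬ (q * p.1 + p.2 ≤ q^3 - 1)) := by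
    ext p
    simp only [Finset.mem_image, Finset.mem_filter, F2, R2, Finset.mem_product,
      Finset.mem_Icc, hσ]
    constructor
    · rintro ⟨x, ⟨⟨⟨hx1, hx2⟩, hx3, hx4⟩, hx5⟩, rfl⟩
      constructor
      · constructor <;> constructor <;> simp <;> linarith
      · simp; linarith
    · rintro ⟨⟨⟨h1, h2⟩, h3, h4⟩, h5⟩
      refine ⟨(2*q^2-q-p.1, q^2-1-p.2), ⟨⟨⟨by dsimp only; linarith, by dsimp only; linarith⟩,
        by dsimp only; linarith, by dsimp only; linarith⟩,
        by push_neg at h5; dsimp only; linarith⟩, by simp⟩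
  have hpart := Finset.card_filter_add_card_filter_not
    (s := R2 q) (p := fun p => q * p.1 + p.2 ≤ q^3 - 1)
  have hci : ((F2 q).image σ).card = (F2 q).card := Finset.card_image_of_injective _ hinj
  rw [himg] at hci
  have : 2 * (F2 q).card = (R2 q).card := by
    rw [two_mul]
    rw [F2] at hci ⊢
    omega
  calc 2 * ((F2 q).card : ℤ) = ((2 * (F2 q).card : ℕ) : ℤ) := by push_cast; ring
    _ = ((R2 q).card : ℤ) := by rw [this]
    _ = (q-1) * q^2 := card_R2 q hq

end Stmt19

namespace Stmt19

lemma two_F1 (q : ℤ) (hq : 2 ≤ q) : 2 * ((F1 q).card : ℤ) = (q^2-q+1) * q^2 + q := by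
  have hq0 : (0:ℤ) < q := by linarith
  set σ : ℤ×ℤ → ℤ×ℤ := fun p => (q^2-q-p.1, q^2-1-p.2) with hσ
  have hinj : Function.Injective σ := by
    intro a b h
    simp only [hσ, Prod.ext_iff] at h ⊢
    omega
  have himg : (F1 q).image σ = (R1 q).filter (fun p => (q+1) * p.1 ≤ q * p.2) := by
    ext p
    simp only [Finset.mem_image, Finset.mem_filter, F1, R1, Finset.mem_product,
      Finset.mem_Icc, hσ]
    constructor
    · rintro ⟨x, ⟨⟨⟨hx1, hx2⟩, hx3, hx4⟩, hx5⟩, rfl⟩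
      refine ⟨⟨⟨by dsimp only; linarith, by dsimp only; linarith⟩,
        by dsimp only; linarith, by dsimp only; linarith⟩, by dsimp only; nlinarith⟩
    · rintro ⟨⟨⟨h1, h2⟩, h3, h4⟩, h5⟩
      refine ⟨(q^2-q-p.1, q^2-1-p.2), ⟨⟨⟨by dsimp only; linarith, by dsimp only; linarith⟩,
        by dsimp only; linarith, by dsimp only; linarith⟩, by dsimp only; nlinarith⟩, by simp⟩
  have hsplit : (R1 q).filter (fun p => (q+1) * p.1 ≤ q * p.2) =
      (R1 q).filter (fun p => ¬ (q * p.2 ≤ (q+1) * p.1)) ∪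
      (R1 q).filter (fun p => (q+1) * p.1 = q * p.2) := by
    ext p
    simp only [Finset.mem_filter, Finset.mem_union, not_le]
    constructor
    · rintro ⟨hm, hle⟩
      rcases lt_or_eq_of_le hle with h | h
      · exact Or.inl ⟨hm, h⟩
      · exact Or.inr ⟨hm, h⟩
    · rintro (⟨hm, h⟩ | ⟨hm, h⟩)
      · exact ⟨hm, le_of_lt h⟩
      · exact ⟨hm, le_of_eq h⟩
  have hdisj : Disjoint ((R1 q).filter (fun p => ¬ (q * p.2 ≤ (q+1) * p.1)))
      ((R1 q).filter (fun p => (q+1) * p.1 = q * p.2)) := by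
    rw [Finset.disjoint_left]
    intro p hp hp'
    simp only [Finset.mem_filter, not_le] at hp hp'
    linarith [hp.2, hp'.2.ge]
  have heqset : (R1 q).filter (fun p => (q+1) * p.1 = q * p.2) =
      (Finset.Icc (0:ℤ) (q-1)).image (fun t => (q*t, (q+1)*t)) := by
    ext ⟨i, j⟩
    simp only [Finset.mem_filter, Finset.mem_image, R1, Finset.mem_product,
      Finset.mem_Icc]
    constructor
    · rintro ⟨⟨⟨hi0, hi1⟩, hj0, hj1⟩, he⟩
      refine ⟨j - i, ⟨by nlinarith, by nlinarith⟩, ?_⟩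
      have e1 : q * (j - i) = i := by linarith
      have e2 : (q+1) * (j - i) = j := by nlinarith
      simp [e1, e2]
    · rintro ⟨t, ⟨ht0, ht1⟩, he⟩
      rw [Prod.ext_iff] at he
      obtain ⟨he1, he2⟩ := he
      dsimp only at he1 he2
      subst he1; subst he2
      refine ⟨⟨⟨by nlinarith, by nlinarith⟩, by nlinarith, by nlinarith⟩, by ring⟩
  have heqcard : ((R1 q).filter (fun p => (q+1) * p.1 = q * p.2)).card = q.toNat := by
    rw [heqset, Finset.card_image_of_injective, Int.card_Icc]
    · norm_num
    · intro a b h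
      simp only [Prod.ext_iff] at h
      exact mul_left_cancel₀ (ne_of_gt hq0) h.1
  have hpart := Finset.card_filter_add_card_filter_not
    (s := R1 q) (p := fun p => q * p.2 ≤ (q+1) * p.1)
  have hcA : (F1 q).card = ((R1 q).filter (fun p => (q+1) * p.1 ≤ q * p.2)).card := by
    rw [← himg, Finset.card_image_of_injective _ hinj]
  have hcU : ((R1 q).filter (fun p => (q+1) * p.1 ≤ q * p.2)).card =
      ((R1 q).filter (fun p => ¬ (q * p.2 ≤ (q+1) * p.1))).card +
      ((R1 q).filter (fun p => (q+1) * p.1 = q * p.2)).card := by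
    rw [hsplit, Finset.card_union_of_disjoint hdisj]
  have key : 2 * (F1 q).card = (R1 q).card + q.toNat := by
    rw [F1] at *
    omega
  calc 2 * ((F1 q).card : ℤ) = ((2 * (F1 q).card : ℕ) : ℤ) := by push_cast; ring
    _ = ((R1 q).card : ℤ) + (q.toNat : ℤ) := by rw [key]; push_cast; ring
    _ = (q^2-q+1) * q^2 + q := by
        rw [card_R1 q hq, Int.toNat_of_nonneg (le_of_lt hq0)]

end Stmt19

theorem stmt_19 (q : ℤ) (hq : 2 ≤ q)
    (N : ℤ → ℕ)
    (hN : ∀ r : ℤ, N r = {ij : ℤ × ℤ | 0 ≤ (q + 1) * ij.1 - q * ij.2 ∧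
        (q + 1) * ij.1 - q * ij.2 < q ^ 3 + q ^ 2 + q ∧
        0 ≤ ij.1 + q ^ 2 * ij.2 ∧ q * ij.1 + ij.2 ≤ r}.ncard) :
    (∀ r r' : ℤ, 0 ≤ r → r ≤ r' → r' ≤ q ^ 3 - 1 → N r ≤ N r') ∧
    (2 * (N (q ^ 3 - 1) : ℤ) = q ^ 4 + q) ∧
    N 0 = 1 := by
  have hq0 : (0:ℤ) < q := by linarith
  set S : ℤ → Set (ℤ × ℤ) := fun r => {ij : ℤ × ℤ | 0 ≤ (q + 1) * ij.1 - q * ij.2 ∧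
        (q + 1) * ij.1 - q * ij.2 < q ^ 3 + q ^ 2 + q ∧
        0 ≤ ij.1 + q ^ 2 * ij.2 ∧ q * ij.1 + ij.2 ≤ r} with hS
  have hNS : ∀ r : ℤ, N r = (S r).ncard := fun r => hN r
  have hmono : ∀ r r' : ℤ, r ≤ r' → S r ⊆ S r' := by
    intro r r' hrr' p hp
    exact ⟨hp.1, hp.2.1, hp.2.2.1, le_trans hp.2.2.2 hrr'⟩
  have htop : S (q^3 - 1) = ↑(Stmt19.F1 q ∪ Stmt19.F2 q) := Stmt19.setEq q hq
  have hfin : (S (q^3 - 1)).Finite := by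
    rw [htop]; exact (Stmt19.F1 q ∪ Stmt19.F2 q).finite_toSet
  refine ⟨?_, ?_, ?_⟩
  · intro r r' _ hrr' hr'top
    rw [hNS r, hNS r']
    exact Set.ncard_le_ncard (hmono r r' hrr')
      (hfin.subset (hmono r' (q^3-1) hr'top))
  · rw [hNS (q^3-1)]
    have hcard : (S (q^3-1)).ncard = (Stmt19.F1 q ∪ Stmt19.F2 q).card := by
      rw [htop, Set.ncard_coe_finset]
    have hdisj : Disjoint (Stmt19.F1 q) (Stmt19.F2 q) := by
      rw [Finset.disjoint_left]
      intro p hp1 hp2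
      rw [Stmt19.mem_F1] at hp1
      rw [Stmt19.mem_F2] at hp2
      linarith [hp1.1.2, hp2.1.1]
    have hunion : (Stmt19.F1 q ∪ Stmt19.F2 q).card = (Stmt19.F1 q).card + (Stmt19.F2 q).card :=
      Finset.card_union_of_disjoint hdisj
    have h1 := Stmt19.two_F1 q hq
    have h2 := Stmt19.two_F2 q hq
    rw [hcard, hunion]
    push_cast
    nlinarith [h1, h2]
  · rw [hNS 0]
    have : S 0 = {((0:ℤ), (0:ℤ))} := by
      ext ⟨i, j⟩
      simp only [hS, Set.mem_setOf_eq, Set.mem_singleton_iff, Prod.mk.injEq]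
      constructor
      · rintro ⟨h1, h2, h3, h4⟩
        have hs0 : 0 ≤ q * i + j := by
          nlinarith [mul_nonneg (by linarith : (0:ℤ) ≤ q - 1) h1, h3]
        have hs : q * i + j = 0 := le_antisymm h4 hs0
        have e1 : i + q^2 * j = 0 := by
          nlinarith [mul_nonneg (by linarith : (0:ℤ) ≤ q - 1) h1, h3]
        have e2 : (q+1) * i - q * j = 0 := by
          nlinarith [mul_nonneg (by linarith : (0:ℤ) ≤ q - 1) h1, h3]
        have hj : (q^3 + q^2 + q) * j = 0 := by linear_combination (q+1) * e1 - e2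
        have hj0 : j = 0 := by
          rcases mul_eq_zero.mp hj with h | h
          · nlinarith
          · exact h
        constructor
        · nlinarith [e1, hj0]
        · exact hj0
      · rintro ⟨rfl, rfl⟩
        refine ⟨by norm_num, by norm_num; nlinarith, by norm_num, by norm_num⟩
    rw [this, Set.ncard_singleton]
end
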